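/- Let μ ∈ ℂ and set λ = e^{μ/m}. Then λ is an eigenvalue of the Euler companion matrix C if and only if det D(μ, ε) = 0, where D(μ, ε) = e^{μ}(g(με)μ·I_n − A) − B and g(x) = (e^x − 1)/x (with g(0) = 1), so that g(με)μ = m(e^{μ/m} − 1). In particular, if det D(μ, ε) = 0 then e^{με} solves the characteristic equation det(λI − C) = 0 of the forward Euler discretization. -/

import Mathlib

open Matrix

/-!
Write the block companion matrix with first block row `(P₀, …, P_m)` as `C = S ⊗ I + E Y`, where
`S` is the subdiagonal shift, `E` the inclusion of the first block and `Y = (P₀ ⋯ P_m)`. The matrix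
determinant lemma gives `det (λ - C) = det ((λ - S) ⊗ I) · det (I - Y ((λ - S)⁻¹ ⊗ I) E)`. The
first factor is `λ ^ ((m + 1) n)` and the first column of `(λ - S)⁻¹` is `(λ⁻¹, …, λ⁻¹ ^ (m + 1))`,
so `det (λ - C) = det (λ ^ (m + 1) - ∑ⱼ λ ^ (m - j) Pⱼ)`. For the Euler blocks `P₀ = I + εA`,
`P_m = εB` and `λ = e ^ (μ / m)`, so that `λ ^ m = e ^ μ`, the matrix on the right is `ε D(μ, ε)`.
-/

/-- The Euler companion matrix `C` of the forward Euler discretization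
`z_{k+1} = z_k + ε A z_k + ε B z_{k-m}`, with step size `ε = 1/m`, written in
`(m+1) × (m+1)` blocks of size `n × n`: the first block row is
`(I + εA, 0, …, 0, εB)`, the subdiagonal blocks are `I`, all other blocks vanish. -/
noncomputable def eulerC (n m : ℕ) (A B : Matrix (Fin n) (Fin n) ℝ) :
    Matrix (Fin (m+1) × Fin n) (Fin (m+1) × Fin n) ℝ :=
  fun ip jq =>
    if ip.1 = 0 then
      (if jq.1 = 0 then (if ip.2 = jq.2 then 1 else 0) + (1 / (m : ℝ)) * A ip.2 jq.2
       else if (jq.1 : ℕ) = m then (1 / (m : ℝ)) * B ip.2 jq.2 else 0)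
    else if (jq.1 : ℕ) + 1 = (ip.1 : ℕ) then (if ip.2 = jq.2 then 1 else 0) else 0

/-- The function `D(μ, ε) = e^μ (g(με) μ I - A) - B`, where `g(x) = (e^x - 1)/x`
(with `g(0) = 1`), so that `g(με) μ = m (e^{μ/m} - 1)` for `ε = 1/m`. -/
noncomputable def Dmat (n m : ℕ) (A B : Matrix (Fin n) (Fin n) ℝ) (μ : ℂ) :
    Matrix (Fin n) (Fin n) ℂ :=
  Complex.exp μ • (((m : ℂ) * (Complex.exp (μ / (m : ℂ)) - 1)) • (1 : Matrix (Fin n) (Fin n) ℂ)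
    - A.map Complex.ofReal) - B.map Complex.ofReal

open scoped Kronecker

namespace Matrix

section Defs

variable (K : Type*) [Zero K] [One K]

def subdiagShift (m : ℕ) : Matrix (Fin (m + 1)) (Fin (m + 1)) K :=
  of fun i j => if (j : ℕ) + 1 = i then 1 else 0

def firstBlockInclusion (n m : ℕ) : Matrix (Fin (m + 1) × Fin n) (Fin n) K :=
  of fun ip q => if ip.1 = 0 then (1 : Matrix (Fin n) (Fin n) K) ip.2 q else 0

variable {K} {n m : ℕ}

def blockRow (P : Fin (m + 1) → Matrix (Fin n) (Fin n) K) :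
    Matrix (Fin n) (Fin (m + 1) × Fin n) K :=
  of fun p jq => P jq.1 p jq.2

def blockCompanion (P : Fin (m + 1) → Matrix (Fin n) (Fin n) K) :
    Matrix (Fin (m + 1) × Fin n) (Fin (m + 1) × Fin n) K :=
  of fun ip jq => if ip.1 = 0 then P jq.1 ip.2 jq.2
    else if (jq.1 : ℕ) + 1 = ip.1 then (1 : Matrix (Fin n) (Fin n) K) ip.2 jq.2 else 0

end Defs

variable {n m : ℕ}

theorem blockCompanion_eq {K : Type*} [NonAssocSemiring K]
    (P : Fin (m + 1) → Matrix (Fin n) (Fin n) K) :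
    blockCompanion P = subdiagShift K m ⊗ₖ 1 + firstBlockInclusion K n m * blockRow P := by
  ext ⟨i, p⟩ ⟨j, q⟩
  simp only [add_apply, Matrix.mul_apply]
  by_cases hi : i = 0
  · simp [blockCompanion, firstBlockInclusion, blockRow, subdiagShift, one_apply, hi]
  · simp [blockCompanion, firstBlockInclusion, blockRow, subdiagShift, one_apply, hi]
    split_ifs <;> rfl

theorem det_smul_one_sub_subdiagShift {K : Type*} [CommRing K] (c : K) :
    (c • 1 - subdiagShift K m).det = c ^ (m + 1) := by
  rw [det_of_isLowerTriangular]
  · simp [subdiagShift]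
  · intro i j (hij : i < j)
    have hshift : (j : ℕ) + 1 ≠ i := by have := Fin.lt_def.1 hij; omega
    simp [subdiagShift, hij.ne, hshift]

section Field

variable {K : Type*} [Field K] {c : K}

theorem smul_one_sub_subdiagShift_mulVec_inv_pow (hc : c ≠ 0) :
    (c • 1 - subdiagShift K m) *ᵥ (fun j : Fin (m + 1) => c⁻¹ ^ ((j : ℕ) + 1)) =
      Pi.single 0 1 := by
  ext i
  rw [sub_mulVec, smul_mulVec, one_mulVec]
  induction i using Fin.cases with
  | zero => simp [subdiagShift, mulVec, dotProduct, hc]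
  | succ i =>
    have hcast (x : Fin (m + 1)) : (x : ℕ) = i ↔ x = i.castSucc := by simp [Fin.ext_iff]
    simp [subdiagShift, mulVec, dotProduct, hcast, pow_succ]
    field_simp
    ring

theorem isUnit_det_smul_one_sub_subdiagShift (hc : c ≠ 0) :
    IsUnit (c • 1 - subdiagShift K m).det := by
  rw [det_smul_one_sub_subdiagShift]
  exact (pow_ne_zero _ hc).isUnit

theorem inv_smul_one_sub_subdiagShift_apply_zero (hc : c ≠ 0) (j : Fin (m + 1)) :
    (c • 1 - subdiagShift K m)⁻¹ j 0 = c⁻¹ ^ ((j : ℕ) + 1) := by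
  calc (c • 1 - subdiagShift K m)⁻¹ j 0
      = ((c • 1 - subdiagShift K m)⁻¹ *ᵥ Pi.single 0 1) j := by simp
    _ = ((c • 1 - subdiagShift K m)⁻¹ *ᵥ
          ((c • 1 - subdiagShift K m) *ᵥ fun j : Fin (m + 1) => c⁻¹ ^ ((j : ℕ) + 1))) j := by
        rw [smul_one_sub_subdiagShift_mulVec_inv_pow hc]
    _ = c⁻¹ ^ ((j : ℕ) + 1) := by
        rw [mulVec_mulVec, nonsing_inv_mul _ (isUnit_det_smul_one_sub_subdiagShift hc),
          one_mulVec]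

theorem det_smul_one_sub_blockCompanion (hc : c ≠ 0)
    (P : Fin (m + 1) → Matrix (Fin n) (Fin n) K) :
    (c • 1 - blockCompanion P).det =
      (c ^ (m + 1) • 1 - ∑ j : Fin (m + 1), c ^ (m - (j : ℕ)) • P j).det := by
  set G := (c • 1 - subdiagShift K m) ⊗ₖ (1 : Matrix (Fin n) (Fin n) K) with hG
  have hsplit : c • 1 - blockCompanion P = G + (-firstBlockInclusion K n m) * blockRow P := by
    rw [blockCompanion_eq, Matrix.neg_mul, ← sub_eq_add_neg, sub_add_eq_sub_sub]
    congr 1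
    ext ⟨i, p⟩ ⟨j, q⟩
    by_cases hpq : p = q <;> simp [hG, one_apply, hpq]
  have hGdet : G.det = (c ^ (m + 1)) ^ n := by
    rw [det_kronecker, det_smul_one_sub_subdiagShift, det_one, one_pow, mul_one, Fintype.card_fin]
  have hcorner : blockRow P * G⁻¹ * (-firstBlockInclusion K n m) =
      -∑ j : Fin (m + 1), c⁻¹ ^ ((j : ℕ) + 1) • P j := by
    rw [hG, inv_kronecker, inv_one]
    ext p q
    simp [Matrix.mul_apply, blockRow, firstBlockInclusion, Fintype.sum_prod_type, one_apply,
      inv_smul_one_sub_subdiagShift_apply_zero hc, Matrix.sum_apply, mul_comm]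
  have hscale (j : Fin (m + 1)) : c ^ (m + 1) * c⁻¹ ^ ((j : ℕ) + 1) = c ^ (m - (j : ℕ)) := by
    rw [inv_pow, ← pow_sub₀ _ hc (by omega)]
    congr 1
    omega
  have hrhs : c ^ (m + 1) • 1 - ∑ j : Fin (m + 1), c ^ (m - (j : ℕ)) • P j =
      c ^ (m + 1) • (1 - ∑ j : Fin (m + 1), c⁻¹ ^ ((j : ℕ) + 1) • P j) := by
    simp only [smul_sub, Finset.smul_sum, smul_smul, hscale]
  rw [hsplit, det_add_mul _ _ (hGdet ▸ (pow_ne_zero _ (pow_ne_zero _ hc)).isUnit), hGdet,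
    hcorner, ← sub_eq_add_neg, hrhs, det_smul, Fintype.card_fin]

end Field

end Matrix

noncomputable def eulerBlocks (n m : ℕ) (A B : Matrix (Fin n) (Fin n) ℝ) :
    Fin (m + 1) → Matrix (Fin n) (Fin n) ℂ :=
  fun j => if j = 0 then 1 + (1 / (m : ℂ)) • A.map Complex.ofReal
    else if (j : ℕ) = m then (1 / (m : ℂ)) • B.map Complex.ofReal else 0

theorem eulerC_map_ofReal {n m : ℕ} (A B : Matrix (Fin n) (Fin n) ℝ) :
    (eulerC n m A B).map Complex.ofReal = blockCompanion (eulerBlocks n m A B) := by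
  ext ⟨i, p⟩ ⟨j, q⟩
  simp only [eulerC, blockCompanion, eulerBlocks, map_apply, of_apply]
  split_ifs <;> simp [one_apply, *]

theorem sum_pow_smul_eulerBlocks {n m : ℕ} (hm : 0 < m) (A B : Matrix (Fin n) (Fin n) ℝ)
    (c : ℂ) :
    ∑ j : Fin (m + 1), c ^ (m - (j : ℕ)) • eulerBlocks n m A B j =
      c ^ m • (1 + (1 / (m : ℂ)) • A.map Complex.ofReal) +
        (1 / (m : ℂ)) • B.map Complex.ofReal := by
  have h0 : (0 : Fin (m + 1)) ≠ Fin.last m := by simp [Fin.ext_iff]; omega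
  rw [Fintype.sum_eq_add 0 (Fin.last m) h0]
  · simp [eulerBlocks, h0.symm]
  · intro j ⟨hj0, hjm⟩
    have hjm' : (j : ℕ) ≠ m := fun h => hjm (Fin.ext h)
    simp [eulerBlocks, hj0, hjm']

theorem Dmat_eq {n m : ℕ} (hm : 0 < m) (A B : Matrix (Fin n) (Fin n) ℝ) (μ : ℂ) :
    Dmat n m A B μ = (m : ℂ) • (Complex.exp (μ / m) ^ (m + 1) • 1 -
      ∑ j : Fin (m + 1), Complex.exp (μ / m) ^ (m - (j : ℕ)) • eulerBlocks n m A B j) := by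
  have hm0 : (m : ℂ) ≠ 0 := by exact_mod_cast hm.ne'
  have hexp : Complex.exp (μ / m) ^ m = Complex.exp μ := by
    rw [← Complex.exp_nat_mul, mul_div_cancel₀ _ hm0]
  rw [sum_pow_smul_eulerBlocks hm, pow_succ, hexp, Dmat]
  match_scalars <;> field_simp

theorem det_Dmat {n m : ℕ} (hm : 0 < m) (A B : Matrix (Fin n) (Fin n) ℝ) (μ : ℂ) :
    (Dmat n m A B μ).det =
      (m : ℂ) ^ n * (Complex.exp (μ / m) • 1 - (eulerC n m A B).map Complex.ofReal).det := by
  rw [Dmat_eq hm, det_smul, Fintype.card_fin, eulerC_map_ofReal,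
    det_smul_one_sub_blockCompanion (Complex.exp_ne_zero _)]

theorem stmt_7_general (n m : ℕ) (hm : 0 < m) (A B : Matrix (Fin n) (Fin n) ℝ)
    (μ : ℂ) :
    (Matrix.det (Complex.exp (μ / (m : ℂ)) •
          (1 : Matrix (Fin (m+1) × Fin n) (Fin (m+1) × Fin n) ℂ)
        - (eulerC n m A B).map Complex.ofReal) = 0 ↔
      Matrix.det (Dmat n m A B μ) = 0) ∧
    (Matrix.det (Dmat n m A B μ) = 0 →
      Matrix.det (Complex.exp (μ * (1 / (m : ℂ))) •
          (1 : Matrix (Fin (m+1) × Fin n) (Fin (m+1) × Fin n) ℂ)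
        - (eulerC n m A B).map Complex.ofReal) = 0) := by
  have hiff : (Complex.exp (μ / m) • 1 - (eulerC n m A B).map Complex.ofReal).det = 0 ↔
      (Dmat n m A B μ).det = 0 := by
    rw [det_Dmat hm, mul_eq_zero, or_iff_right (pow_ne_zero _ (by exact_mod_cast hm.ne'))]
  exact ⟨hiff, fun h => by rwa [mul_one_div, hiff]⟩

theorem stmt_7 (n m : ℕ) (hn : 0 < n) (hm : 0 < m) (A B : Matrix (Fin n) (Fin n) ℝ)
    (μ : ℂ) :
    (Matrix.det (Complex.exp (μ / (m : ℂ)) •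
          (1 : Matrix (Fin (m+1) × Fin n) (Fin (m+1) × Fin n) ℂ)
        - (eulerC n m A B).map Complex.ofReal) = 0 ↔
      Matrix.det (Dmat n m A B μ) = 0) ∧
    (Matrix.det (Dmat n m A B μ) = 0 →
      Matrix.det (Complex.exp (μ * (1 / (m : ℂ))) •
          (1 : Matrix (Fin (m+1) × Fin n) (Fin (m+1) × Fin n) ℂ)
        - (eulerC n m A B).map Complex.ofReal) = 0) :=
  stmt_7_general n m hm A B μ
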